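/- Worked 3×3 example of a port-Hamiltonian realization: let E = diag(1,0,0), A = [[−1,−1,0],[−1,0,0],[0,0,−1]], B = [[1,1],[−1,0],[0,1]] (n = 3, m = 2). Then the quintuple (E, A, B, C', D') with C' = [[3,1,−1],[0,0,−1]] and D' = I₂ is port-Hamiltonian, and for every s ∈ ℂ with det(sE−A) ≠ 0 it has the same transfer function as the quintuple (E, A, B, C, D) with C = [[1,1,−1],[0,0,1]] and D = −I₂, i.e. C'(sE−A)^{-1}B + D' = C(sE−A)^{-1}B + D. -/

import Mathlib

open Matrix
open scoped ComplexOrder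

/-- View a real matrix as a complex matrix. -/
noncomputable def toC {k l : Type*} (M : Matrix k l ℝ) : Matrix k l ℂ :=
  M.map (fun x => (x : ℂ))

/-- The matrix pencil `s E - A`, viewed over `ℂ`. -/
noncomputable def pencil {n : ℕ} (E A : Matrix (Fin n) (Fin n) ℝ) (s : ℂ) :
    Matrix (Fin n) (Fin n) ℂ :=
  s • toC E - toC A

/-- The transfer function `T(s) = C (sE - A)⁻¹ B + D` of the descriptor system. -/
noncomputable def transfer {n m : ℕ} (E A : Matrix (Fin n) (Fin n) ℝ)
    (B : Matrix (Fin n) (Fin m) ℝ) (C : Matrix (Fin m) (Fin n) ℝ)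
    (D : Matrix (Fin m) (Fin m) ℝ) (s : ℂ) : Matrix (Fin m) (Fin m) ℂ :=
  toC C * (pencil E A s)⁻¹ * toC B + toC D

/-- A descriptor system is positive real if the pencil is invertible on the open right
half-plane and `T(s) + T(s)ᴴ` is positive semidefinite there. -/
def PositiveReal {n m : ℕ} (E A : Matrix (Fin n) (Fin n) ℝ)
    (B : Matrix (Fin n) (Fin m) ℝ) (C : Matrix (Fin m) (Fin n) ℝ)
    (D : Matrix (Fin m) (Fin m) ℝ) : Prop :=
  ∀ s : ℂ, 0 < s.re → (pencil E A s).det ≠ 0 ∧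
    (transfer E A B C D s + (transfer E A B C D s)ᴴ).PosSemidef

/-- Complete controllability: `[αE - βA, B]` has full row rank for all `(α,β) ≠ (0,0)`. -/
def CompletelyControllable {n m : ℕ} (E A : Matrix (Fin n) (Fin n) ℝ)
    (B : Matrix (Fin n) (Fin m) ℝ) : Prop :=
  ∀ α β : ℂ, ¬(α = 0 ∧ β = 0) →
    (fromCols (α • toC E - β • toC A) (toC B)).rank = n

/-- Complete observability: `[αE - βA; C]` has full column rank for all `(α,β) ≠ (0,0)`. -/
def CompletelyObservable {n m : ℕ} (E A : Matrix (Fin n) (Fin n) ℝ)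
    (C : Matrix (Fin m) (Fin n) ℝ) : Prop :=
  ∀ α β : ℂ, ¬(α = 0 ∧ β = 0) →
    (fromRows (α • toC E - β • toC A) (toC C)).rank = n

/-- A descriptor system `(E,A,B,C,D)` is port-Hamiltonian if it admits a pH decomposition. -/
def IsPortHamiltonian {n m : ℕ} (E A : Matrix (Fin n) (Fin n) ℝ)
    (B : Matrix (Fin n) (Fin m) ℝ) (C : Matrix (Fin m) (Fin n) ℝ)
    (D : Matrix (Fin m) (Fin m) ℝ) : Prop :=
  ∃ (J R Q : Matrix (Fin n) (Fin n) ℝ) (G P : Matrix (Fin n) (Fin m) ℝ),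
    A = (J - R) * Q ∧ B = G - P ∧ C = (G + P)ᵀ * Q ∧ Jᵀ = -J ∧
    (Eᵀ * Q).PosSemidef ∧
    (fromBlocks (Qᵀ * R * Q) (Qᵀ * P) (Pᵀ * Q) ((1/2 : ℝ) • (D + Dᵀ))).PosSemidef

/-- The KYP block matrix `[[AᵀQ + QᵀA, QᵀB - Cᵀ], [BᵀQ - C, -D - Dᵀ]]`. -/
def KYPmatrix {n m : ℕ} (A : Matrix (Fin n) (Fin n) ℝ)
    (B : Matrix (Fin n) (Fin m) ℝ) (C : Matrix (Fin m) (Fin n) ℝ)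
    (D : Matrix (Fin m) (Fin m) ℝ) (Q : Matrix (Fin n) (Fin n) ℝ) :
    Matrix (Fin n ⊕ Fin m) (Fin n ⊕ Fin m) ℝ :=
  fromBlocks (Aᵀ * Q + Qᵀ * A) (Qᵀ * B - Cᵀ) (Bᵀ * Q - C) (-D - Dᵀ)

/-!
With `L = [[0,2,0],[0,0,-2]]` one has `L E = 0`, so `C' - C = -L A = L (sE - A)` for every `s`;
hence `C' (sE - A)⁻¹ B = C (sE - A)⁻¹ B + L B`, and `L B = -2 I = D - D'`. The port-Hamiltonian
structure is certified by explicit `J, R, Q, G, P` for which `EᵀQ` and the dissipation block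
matrix are Gram matrices `FᵀF` and `[X Y]ᵀ[X Y]`.
-/

section toC

variable {k l o : Type*}

theorem toC_add (M N : Matrix k l ℝ) : toC (M + N) = toC M + toC N :=
  Matrix.map_add _ Complex.ofReal_add M N

theorem toC_sub (M N : Matrix k l ℝ) : toC (M - N) = toC M - toC N :=
  Matrix.map_sub _ Complex.ofReal_sub M N

theorem toC_zero : toC (0 : Matrix k l ℝ) = 0 :=
  Matrix.map_zero _ Complex.ofReal_zero

theorem toC_mul [Fintype l] (M : Matrix k l ℝ) (N : Matrix l o ℝ) :
    toC (M * N) = toC M * toC N :=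
  Matrix.map_mul (f := Complex.ofRealHom)

end toC

theorem transfer_eq_of_mul_eq_zero {n m : ℕ} {E A : Matrix (Fin n) (Fin n) ℝ}
    {B : Matrix (Fin n) (Fin m) ℝ} {C C' L : Matrix (Fin m) (Fin n) ℝ}
    {D D' : Matrix (Fin m) (Fin m) ℝ} (hLE : L * E = 0) (hC : C' = C - L * A)
    (hD : D = D' + L * B) {s : ℂ} (hs : (pencil E A s).det ≠ 0) :
    transfer E A B C' D' s = transfer E A B C D s := by
  have hLP : toC C' = toC C + toC L * pencil E A s := by
    rw [hC, pencil, Matrix.mul_sub, Matrix.mul_smul, ← toC_mul, ← toC_mul, hLE, toC_zero,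
      smul_zero, zero_sub, toC_sub, sub_eq_add_neg]
  have hPinv : pencil E A s * (pencil E A s)⁻¹ = 1 :=
    mul_nonsing_inv _ (isUnit_iff_ne_zero.mpr hs)
  rw [transfer, transfer, hLP, hD, Matrix.add_mul, Matrix.add_mul, Matrix.mul_assoc (toC L),
    hPinv, Matrix.mul_one, toC_add, toC_mul]
  abel

theorem posSemidef_transpose_mul_self {k n : Type*} [Fintype k] [Fintype n]
    (X : Matrix k n ℝ) : (Xᵀ * X).PosSemidef := by
  simpa using posSemidef_conjTranspose_mul_self X

theorem isPortHamiltonian_of_gram {n m : ℕ} {k k' : Type*} [Fintype k] [Fintype k']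
    {E A : Matrix (Fin n) (Fin n) ℝ} {B : Matrix (Fin n) (Fin m) ℝ}
    {C : Matrix (Fin m) (Fin n) ℝ} {D : Matrix (Fin m) (Fin m) ℝ}
    (J R Q : Matrix (Fin n) (Fin n) ℝ) (G P : Matrix (Fin n) (Fin m) ℝ)
    (F : Matrix k (Fin n) ℝ) (X : Matrix k' (Fin n) ℝ) (Y : Matrix k' (Fin m) ℝ)
    (hA : A = (J - R) * Q) (hB : B = G - P) (hC : C = (G + P)ᵀ * Q) (hJ : Jᵀ = -J)
    (hEQ : Eᵀ * Q = Fᵀ * F) (hR : Qᵀ * R * Q = Xᵀ * X) (hP : Qᵀ * P = Xᵀ * Y)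
    (hD : (1 / 2 : ℝ) • (D + Dᵀ) = Yᵀ * Y) : IsPortHamiltonian E A B C D := by
  refine ⟨J, R, Q, G, P, hA, hB, hC, hJ, hEQ ▸ posSemidef_transpose_mul_self F, ?_⟩
  have hPQ : Pᵀ * Q = Yᵀ * X := by
    rw [← transpose_transpose Q, ← transpose_mul, hP, transpose_mul, transpose_transpose]
  rw [hR, hP, hPQ, hD, ← fromRows_mul_fromCols, ← transpose_fromCols]
  exact posSemidef_transpose_mul_self _

/-- Worked 3×3 example: `(E, A, B, C', I₂)` with `C' = [[3,1,-1],[0,0,-1]]`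
is a port-Hamiltonian realization of `(E, A, B, C, -I₂)` with `C = [[1,1,-1],[0,0,1]]`. -/
theorem example_pH_realization_3x3 :
    IsPortHamiltonian (!![1, 0, 0; 0, 0, 0; 0, 0, 0] : Matrix (Fin 3) (Fin 3) ℝ)
      !![-1, -1, 0; -1, 0, 0; 0, 0, -1] !![(1 : ℝ), 1; -1, 0; 0, 1]
      !![(3 : ℝ), 1, -1; 0, 0, -1] !![(1 : ℝ), 0; 0, 1] ∧
    ∀ s : ℂ,
      (pencil (!![1, 0, 0; 0, 0, 0; 0, 0, 0] : Matrix (Fin 3) (Fin 3) ℝ)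
        !![-1, -1, 0; -1, 0, 0; 0, 0, -1] s).det ≠ 0 →
      toC !![(3 : ℝ), 1, -1; 0, 0, -1] *
          (pencil (!![1, 0, 0; 0, 0, 0; 0, 0, 0] : Matrix (Fin 3) (Fin 3) ℝ)
            !![-1, -1, 0; -1, 0, 0; 0, 0, -1] s)⁻¹ *
          toC !![(1 : ℝ), 1; -1, 0; 0, 1] + toC !![(1 : ℝ), 0; 0, 1]
        = toC !![(1 : ℝ), 1, -1; 0, 0, 1] *
          (pencil (!![1, 0, 0; 0, 0, 0; 0, 0, 0] : Matrix (Fin 3) (Fin 3) ℝ)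
            !![-1, -1, 0; -1, 0, 0; 0, 0, -1] s)⁻¹ *
          toC !![(1 : ℝ), 1; -1, 0; 0, 1] + toC !![(-1 : ℝ), 0; 0, -1] := by
  refine ⟨isPortHamiltonian_of_gram !![0, 1, 0; -1, 0, 0; 0, 0, 0] !![2, 0, 1; 0, 0, 0; 1, 0, 1]
      !![1, 0, 0; 0, -1, 1; -1, 0, 1] !![2, 0; -1, 0; 0, 0] !![1, -1; 0, 0; 0, -1]
      !![(1 : ℝ), 0, 0] !![(1 : ℝ), 0, 0; 0, 0, 1] !![(1 : ℝ), 0; 0, -1] ?_ ?_ ?_ ?_ ?_ ?_ ?_ ?_,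
    fun s hs => transfer_eq_of_mul_eq_zero (L := !![0, 2, 0; 0, 0, -2]) ?_ ?_ ?_ hs⟩ <;>
  · ext i j
    fin_cases i <;> fin_cases j <;> norm_num [Matrix.mul_apply, Fin.sum_univ_succ]
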